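/- For pairwise distinct real numbers λ_1, …, λ_n, the basic separable potentials V^{(α)} = (V_1^{(α)}, …, V_n^{(α)})^T with V_r^{(α)} = ∑_i (∂ρ_r/∂λ_i) λ_i^α / Δ_i satisfy the recursion V^{(α+1)} = R V^{(α)} for α ≥ 0, where R is the n×n companion-type matrix with first column (-ρ_1, …, -ρ_n)^T, entries R_{i,i+1} = 1 for i = 1,…,n-1, and zeros elsewhere, and V^{(0)} = (0, …, 0, -1)^T. -/

import Mathlib

/-- The `i`-th elementary symmetric polynomial `σ_i(λ₁,…,λ_n)`. -/
noncomputable def esymmF (n i : ℕ) (l : Fin n → ℝ) : ℝ :=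
  ∑ s ∈ Finset.powersetCard i Finset.univ, ∏ j ∈ s, l j

/-- `ρ_i = (-1)^i σ_i(λ)`. -/
noncomputable def rho (n i : ℕ) (l : Fin n → ℝ) : ℝ :=
  (-1) ^ i * esymmF n i l

/-- Partial derivative `∂f/∂λ_j` evaluated at `l`. -/
noncomputable def pd (n : ℕ) (f : (Fin n → ℝ) → ℝ) (l : Fin n → ℝ) (j : Fin n) : ℝ :=
  deriv (fun t => f (Function.update l j t)) (l j)

/-- `Δ_j = ∏_{k≠j} (λ_j - λ_k)`. -/
noncomputable def Delta (n : ℕ) (l : Fin n → ℝ) (j : Fin n) : ℝ :=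
  ∏ k ∈ Finset.univ.erase j, (l j - l k)

noncomputable def Esub (n : ℕ) (l : Fin n → ℝ) (i : Fin n) (m : ℕ) : ℝ :=
  ∑ s ∈ Finset.powersetCard m (Finset.univ.erase i), ∏ j ∈ s, l j

lemma esymm_update (n : ℕ) (l : Fin n → ℝ) (i : Fin n) (k : ℕ) (t : ℝ) :
    esymmF n (k+1) (Function.update l i t) = Esub n l i (k+1) + t * Esub n l i k := by
  have hins : (Finset.univ : Finset (Fin n)) = insert i (Finset.univ.erase i) :=
    (Finset.insert_erase (Finset.mem_univ i)).symm
  rw [esymmF, hins, Finset.powersetCard_succ_insert (Finset.notMem_erase i _),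
    Finset.sum_union]
  · congr 1
    · rw [Esub]
      refine Finset.sum_congr rfl fun s hs => Finset.prod_congr rfl fun j hj => ?_
      have hji : j ≠ i := by
        have := (Finset.mem_powersetCard.mp hs).1 hj
        exact Finset.ne_of_mem_erase this
      exact Function.update_of_ne hji t l
    · rw [Finset.sum_image, Esub, Finset.mul_sum]
      · refine Finset.sum_congr rfl fun s hs => ?_
        have his : i ∉ s := fun h =>
          Finset.notMem_erase i _ ((Finset.mem_powersetCard.mp hs).1 h)
        rw [Finset.prod_insert his, Function.update_self]
        congr 1
        refine Finset.prod_congr rfl fun j hj => ?_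
        refine Function.update_of_ne (fun h : j = i => his ?_) t l
        rw [← h]; exact hj
      · intro s hs u hu h
        have his : i ∉ s := fun h' =>
          Finset.notMem_erase i _ ((Finset.mem_powersetCard.mp hs).1 h')
        have hiu : i ∉ u := fun h' =>
          Finset.notMem_erase i _ ((Finset.mem_powersetCard.mp hu).1 h')
        rw [← Finset.erase_insert his, ← Finset.erase_insert hiu, h]
  · rw [Finset.disjoint_left]
    intro s hs hs'
    obtain ⟨u, hu, rfl⟩ := Finset.mem_image.mp hs'
    have := (Finset.mem_powersetCard.mp hs).1 (Finset.mem_insert_self i u)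
    exact Finset.notMem_erase i _ this

lemma pd_rho (n : ℕ) (l : Fin n → ℝ) (i : Fin n) (k : ℕ) :
    pd n (rho n (k+1)) l i = (-1) ^ (k+1) * Esub n l i k := by
  have h : (fun t => rho n (k+1) (Function.update l i t))
      = fun t => (-1:ℝ)^(k+1) * Esub n l i (k+1) + ((-1:ℝ)^(k+1) * Esub n l i k) * t := by
    funext t
    rw [rho, esymm_update]
    ring
  rw [pd, h]
  have : HasDerivAt (fun t : ℝ => (-1:ℝ)^(k+1) * Esub n l i (k+1)
      + ((-1:ℝ)^(k+1) * Esub n l i k) * t)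
      ((-1:ℝ)^(k+1) * Esub n l i k) (l i) := by
    simpa using ((hasDerivAt_id (l i)).const_mul ((-1:ℝ)^(k+1) * Esub n l i k)).const_add
      ((-1:ℝ)^(k+1) * Esub n l i (k+1))
  exact this.deriv

lemma Esub_zero (n : ℕ) (l : Fin n → ℝ) (i : Fin n) : Esub n l i 0 = 1 := by
  simp [Esub]

lemma Esub_top (n : ℕ) (l : Fin n → ℝ) (i : Fin n) (m : ℕ) (hm : n ≤ m) :
    Esub n l i m = 0 := by
  rw [Esub, Finset.powersetCard_eq_empty.mpr, Finset.sum_empty]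
  rw [Finset.card_erase_of_mem (Finset.mem_univ i), Finset.card_univ, Fintype.card_fin]
  have : 1 ≤ n := Nat.one_le_iff_ne_zero.mpr (by rintro rfl; exact absurd i.2 (by omega))
  omega

lemma lam_mul_Esub (n : ℕ) (l : Fin n → ℝ) (i : Fin n) (k : ℕ) :
    l i * Esub n l i k = esymmF n (k+1) l - Esub n l i (k+1) := by
  have := esymm_update n l i k (l i)
  rw [Function.update_eq_self] at this
  linarith

lemma Delta_ne_zero (n : ℕ) (l : Fin n → ℝ) (hl : Function.Injective l) (i : Fin n) :
    Delta n l i ≠ 0 := by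
  rw [Delta]
  refine Finset.prod_ne_zero_iff.mpr fun k hk => ?_
  have : k ≠ i := Finset.ne_of_mem_erase hk
  exact sub_ne_zero.mpr fun h => this (hl h).symm

open Polynomial in
lemma lagrange_sum (n : ℕ) (l : Fin n → ℝ) (hl : Function.Injective l) (hn : 0 < n)
    (r : ℕ) (hr : r ≤ n - 1) :
    ∑ i, Esub n l i r * (Delta n l i)⁻¹ =
      if r = n - 1 then (-1:ℝ)^(n-1) else 0 := by
  have hne : Nonempty (Fin n) := ⟨⟨0, hn⟩⟩
  have hsum := Lagrange.sum_basis (s := (Finset.univ : Finset (Fin n))) (v := l)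
    hl.injOn Finset.univ_nonempty
  have hbasis : ∀ i : Fin n, Lagrange.basis Finset.univ l i
      = C (Delta n l i)⁻¹ * ∏ j ∈ Finset.univ.erase i, (X - C (l j)) := by
    intro i
    rw [Lagrange.basis]
    simp_rw [Lagrange.basisDivisor]
    rw [Finset.prod_mul_distrib, ← map_prod, Delta, ← Finset.prod_inv_distrib]
  have hcoeff : ∀ i : Fin n, (∏ j ∈ Finset.univ.erase i, (X - C (l j))).coeff (n-1-r)
      = (-1:ℝ)^r * Esub n l i r := by
    intro i
    have hcard : Multiset.card ((Finset.univ.erase i).val.map l) = n - 1 := by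
      rw [Multiset.card_map, Finset.card_val,
        Finset.card_erase_of_mem (Finset.mem_univ i), Finset.card_univ, Fintype.card_fin]
    rw [Finset.prod_eq_multiset_prod]
    have hmm : (Finset.univ.erase i).val.map (fun j => X - C (l j))
        = ((Finset.univ.erase i).val.map l).map (fun a => X - C a) := by
      rw [Multiset.map_map]; rfl
    rw [hmm, Multiset.prod_X_sub_C_coeff _ (by rw [hcard]; omega), hcard]
    have h2 : n - 1 - (n - 1 - r) = r := by omega
    rw [h2, Finset.esymm_map_val]
    rfl
  have key : ∑ i, (Delta n l i)⁻¹ * ((-1:ℝ)^r * Esub n l i r)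
      = (1:ℝ[X]).coeff (n-1-r) := by
    rw [← hsum, Polynomial.finset_sum_coeff]
    refine Finset.sum_congr rfl fun i _ => ?_
    rw [hbasis i, Polynomial.coeff_C_mul, hcoeff i]
  rw [Polynomial.coeff_one] at key
  have hflip : ∑ i, Esub n l i r * (Delta n l i)⁻¹
      = (-1:ℝ)^r * ∑ i, (Delta n l i)⁻¹ * ((-1:ℝ)^r * Esub n l i r) := by
    rw [Finset.mul_sum]
    refine Finset.sum_congr rfl fun i _ => ?_
    have h4 : (-1:ℝ)^r * (-1:ℝ)^r = 1 := by rw [← mul_pow]; norm_num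
    calc Esub n l i r * (Delta n l i)⁻¹
        = ((-1:ℝ)^r * (-1:ℝ)^r) * (Esub n l i r * (Delta n l i)⁻¹) := by rw [h4, one_mul]
      _ = (-1:ℝ)^r * ((Delta n l i)⁻¹ * ((-1:ℝ)^r * Esub n l i r)) := by ring
  rw [hflip, key]
  by_cases h : r = n - 1
  · subst h
    simp [Nat.sub_self]
  · have h5 : ¬ (n - 1 - r = 0) := by omega
    simp [h, h5]

theorem basic_potentials_recursion (n : ℕ) (l : Fin n → ℝ) (hl : Function.Injective l)
    (V : ℕ → Fin n → ℝ)
    (hV : ∀ a r, V a r = ∑ i, pd n (rho n ((r : ℕ) + 1)) l i * l i ^ a / Delta n l i)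
    (R : Matrix (Fin n) (Fin n) ℝ)
    (hR : ∀ i j, R i j = if (j : ℕ) = 0 then -(rho n ((i : ℕ) + 1) l)
      else if (j : ℕ) = (i : ℕ) + 1 then 1 else 0) :
    (V 0 = fun r : Fin n => if (r : ℕ) = n - 1 then (-1 : ℝ) else 0) ∧
      ∀ a : ℕ, V (a + 1) = R.mulVec (V a) := by
  constructor
  · funext r
    have hn : 0 < n := r.pos
    have h1 : V 0 r = (-1:ℝ)^((r:ℕ)+1) * ∑ i, Esub n l i (r:ℕ) * (Delta n l i)⁻¹ := by
      rw [hV, Finset.mul_sum]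
      refine Finset.sum_congr rfl fun i _ => ?_
      rw [pd_rho, pow_zero, div_eq_mul_inv]
      ring
    rw [h1, lagrange_sum n l hl hn (r:ℕ) (by omega)]
    by_cases h : (r:ℕ) = n - 1
    · rw [if_pos h, if_pos h, h, ← pow_add]
      have : (n - 1 + 1 + (n - 1)) = 2 * (n-1) + 1 := by omega
      rw [this, pow_succ, pow_mul]
      norm_num
    · rw [if_neg h, if_neg h, mul_zero]
  · intro a
    funext r
    have hn : 0 < n := r.pos
    set z0 : Fin n := ⟨0, hn⟩ with hz0
    have hVz0 : V a z0 = -∑ i, l i ^ a / Delta n l i := by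
      rw [hV, ← Finset.sum_neg_distrib]
      refine Finset.sum_congr rfl fun i _ => ?_
      have : ((z0 : ℕ) + 1) = 0 + 1 := rfl
      rw [this, pd_rho, Esub_zero]
      ring
    have hterm : ∀ i, pd n (rho n ((r:ℕ)+1)) l i * l i ^ (a+1) / Delta n l i
        = rho n ((r:ℕ)+1) l * (l i ^ a / Delta n l i)
          + pd n (rho n ((r:ℕ)+1+1)) l i * l i ^ a / Delta n l i := by
      intro i
      rw [pd_rho, pd_rho]
      have hD := Delta_ne_zero n l hl i
      have hmul := lam_mul_Esub n l i (r:ℕ)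
      have hrho : rho n ((r:ℕ)+1) l = (-1:ℝ)^((r:ℕ)+1) * esymmF n ((r:ℕ)+1) l := rfl
      field_simp
      rw [hrho]
      linear_combination ((-1:ℝ)^((r:ℕ)+1) * l i ^ a) * hmul
    have hL : V (a+1) r = rho n ((r:ℕ)+1) l * ∑ i, l i ^ a / Delta n l i
        + ∑ i, pd n (rho n ((r:ℕ)+1+1)) l i * l i ^ a / Delta n l i := by
      rw [hV, Finset.mul_sum, ← Finset.sum_add_distrib]
      exact Finset.sum_congr rfl fun i _ => hterm i
    have hRU : R.mulVec (V a) r = ∑ j, R r j * V a j := by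
      simp [Matrix.mulVec, dotProduct]
    by_cases hcase : (r:ℕ) + 1 < n
    · set z1 : Fin n := ⟨(r:ℕ)+1, hcase⟩ with hz1
      have hsplit : ∀ j : Fin n, R r j * V a j
          = (if j = z0 then -(rho n ((r:ℕ)+1) l) * V a z0 else 0)
            + (if j = z1 then V a z1 else 0) := by
        intro j
        rw [hR]
        by_cases hj0 : (j:ℕ) = 0
        · have : j = z0 := Fin.ext hj0
          subst this
          rw [if_pos hj0, if_pos rfl, if_neg (by simp [hz1, Fin.ext_iff])]
          ring
        · rw [if_neg hj0]
          by_cases hj1 : (j:ℕ) = (r:ℕ) + 1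
          · have : j = z1 := Fin.ext hj1
            subst this
            rw [if_pos hj1, if_neg (by simp [hz0, Fin.ext_iff]), if_pos rfl]
            ring
          · rw [if_neg hj1, if_neg (fun h => hj0 (by rw [h])),
              if_neg (fun h => hj1 (by rw [h]))]
            ring
      rw [hRU, Finset.sum_congr rfl (fun j _ => hsplit j), Finset.sum_add_distrib,
        Finset.sum_ite_eq' _ z0, Finset.sum_ite_eq' _ z1,
        if_pos (Finset.mem_univ z0), if_pos (Finset.mem_univ z1)]
      have hVz1 : V a z1 = ∑ i, pd n (rho n ((r:ℕ)+1+1)) l i * l i ^ a / Delta n l i := by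
        rw [hV]
      rw [hVz1, hL, hVz0]
      ring
    · have hrtop : (r:ℕ) = n - 1 := by have := r.isLt; omega
      have hsplit : ∀ j : Fin n, R r j * V a j
          = (if j = z0 then -(rho n ((r:ℕ)+1) l) * V a z0 else 0) := by
        intro j
        rw [hR]
        by_cases hj0 : (j:ℕ) = 0
        · have : j = z0 := Fin.ext hj0
          subst this
          rw [if_pos hj0, if_pos rfl]
        · rw [if_neg hj0, if_neg (by have := j.isLt; omega),
            if_neg (fun h => hj0 (by rw [h]))]
          ring
      rw [hRU, Finset.sum_congr rfl (fun j _ => hsplit j),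
        Finset.sum_ite_eq' _ z0, if_pos (Finset.mem_univ z0)]
      have hzero : ∑ i, pd n (rho n ((r:ℕ)+1+1)) l i * l i ^ a / Delta n l i = 0 := by
        refine Finset.sum_eq_zero fun i _ => ?_
        rw [pd_rho, Esub_top n l i ((r:ℕ)+1) (by omega)]
        ring
      rw [hL, hzero, hVz0]
      ring
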